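/- arXiv:2509.20945 — 3 statements merged into one kernel-verified Lean document; each statement's English description precedes it below -/
import Mathlib

section
/- Let k be an algebraically closed field of characteristic p > 0 and let G ⊂ GL(m,k) be a finite subgroup consisting of matrices that equal the identity except possibly in the first row. If the order of G is coprime to p, then G is cyclic. -/
open Matrix

/-- `A` agrees with the identity matrix except possibly in the first row. -/
def FirstRowOnly {m : ℕ} [NeZero m] {k : Type*} [Field k]
    (A : Matrix (Fin m) (Fin m) k) : Prop :=
  ∀ i j : Fin m, i ≠ 0 → A i j = (1 : Matrix (Fin m) (Fin m) k) i j

lemma mul_entry00 {m : ℕ} [NeZero m] {k : Type*} [Field k]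
    (A B : Matrix (Fin m) (Fin m) k) (hB : FirstRowOnly B) :
    (A * B) 0 0 = A 0 0 * B 0 0 := by
  rw [Matrix.mul_apply]
  rw [Finset.sum_eq_single 0]
  · intro l _ hl
    rw [hB l 0 hl, Matrix.one_apply_ne hl, mul_zero]
  · intro h; exact absurd (Finset.mem_univ 0) h

lemma one_add_nil_pow {R : Type*} [Ring R] (N : R) (hNsq : N * N = 0) :
    ∀ n : ℕ, (1 + N) ^ n = 1 + n • N := by
  intro n
  induction n with
  | zero => simp
  | succ n ih =>
    rw [pow_succ, ih, add_smul, one_smul]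
    rw [add_mul, mul_add, mul_add, one_mul, mul_one, smul_mul_assoc, hNsq, smul_zero]
    rw [one_mul]; abel

lemma unipotent_eq_one {m : ℕ} [NeZero m] {k : Type*} [Field k]
    (p : ℕ) [Fact p.Prime] [CharP k p]
    (G : Subgroup (GL (Fin m) k)) [Finite G]
    (hG : ∀ A ∈ G, FirstRowOnly (A : Matrix (Fin m) (Fin m) k))
    (hcop : (Nat.card G).Coprime p)
    (a : G) (h1 : ((a : GL (Fin m) k) : Matrix (Fin m) (Fin m) k) 0 0 = 1) :
    a = 1 := by
  set B : Matrix (Fin m) (Fin m) k := ((a : GL (Fin m) k) : Matrix (Fin m) (Fin m) k) with hBdef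
  have hfr : FirstRowOnly B := hG _ a.2
  set N : Matrix (Fin m) (Fin m) k := B - 1 with hN
  have hNsq : N * N = 0 := by
    ext i j
    rw [Matrix.mul_apply]
    apply Finset.sum_eq_zero
    intro l _
    rcases eq_or_ne i 0 with hi | hi
    · rcases eq_or_ne l 0 with hl | hl
      · subst hi hl
        have : N 0 0 = 0 := by simp [hN, h1]
        rw [this, zero_mul]
      · have : N l j = 0 := by
          simp only [hN, Matrix.sub_apply]
          rw [hfr l j hl]; ring
        rw [this, mul_zero]
    · have : N i l = 0 := by
        simp only [hN, Matrix.sub_apply]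
        rw [hfr i l hi]; ring
      rw [this, zero_mul]
  have hp := (Fact.out : p.Prime)
  have hpow := one_add_nil_pow N hNsq
  have hBp : B ^ p = 1 := by
    have hB1N : B = 1 + N := by simp [hN]
    rw [hB1N, hpow p]
    have : (p : ℕ) • N = 0 := by
      ext i j
      simp only [Matrix.smul_apply, nsmul_eq_mul, Matrix.zero_apply]
      rw [show ((p : k) : k) = 0 from CharP.cast_eq_zero k p, zero_mul]
    rw [this, add_zero]
  have hGLp : (a : GL (Fin m) k) ^ p = 1 := by
    apply Units.ext
    push_cast
    exact hBp
  have hap : a ^ p = 1 := by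
    apply Subtype.ext
    push_cast
    exact hGLp
  have hdvd1 : orderOf a ∣ p := orderOf_dvd_of_pow_eq_one hap
  have hdvd2 : orderOf a ∣ Nat.card G := orderOf_dvd_natCard a
  have : orderOf a ∣ 1 := hcop ▸ Nat.dvd_gcd hdvd2 hdvd1
  rw [← orderOf_eq_one_iff]
  exact Nat.dvd_one.mp this

/-- A finite subgroup of `GL(m,k)`, consisting of matrices equal to the identity except
possibly in the first row, of order coprime to `p = char k > 0`, is cyclic. -/
theorem stmt3 {m : ℕ} [NeZero m] {k : Type*} [Field k] [IsAlgClosed k]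
    (p : ℕ) [Fact p.Prime] [CharP k p]
    (G : Subgroup (GL (Fin m) k)) [Finite G]
    (hG : ∀ A ∈ G, FirstRowOnly (A : Matrix (Fin m) (Fin m) k))
    (hcop : (Nat.card G).Coprime p) :
    IsCyclic G := by
  let f : G →* k :=
    { toFun := fun a => ((a : GL (Fin m) k) : Matrix (Fin m) (Fin m) k) 0 0
      map_one' := by simp
      map_mul' := by
        intro a b
        simp only [Subgroup.coe_mul, Units.val_mul]
        exact mul_entry00 _ _ (hG _ b.2) }
  have hinj : Function.Injective f := by
    intro a b hab
    have hb1 : f b * f b⁻¹ = 1 := by rw [← f.map_mul, mul_inv_cancel, f.map_one]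
    have h : f (a * b⁻¹) = 1 := by
      rw [f.map_mul, hab, hb1]
    have h2 : a * b⁻¹ = 1 := unipotent_eq_one p G hG hcop (a * b⁻¹) h
    exact mul_inv_eq_one.mp h2
  exact isCyclic_of_subgroup_isDomain f hinj
end

section
/- Let k be an algebraically closed field of characteristic p > 0, and let G ⊂ GL(m,k) be a finite subgroup of matrices equal to the identity except possibly in the first row, with |G| = p^u · l, gcd(p,l)=1 and u ≥ 1, l ≥ 1. Then l divides p^u − 1. -/
open Matrix

section Aux

lemma aux_free_perm_dvd {X : Type*} [Finite X] (σ : Equiv.Perm X) (l : ℕ) (hl : 1 ≤ l)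
    (hσl : σ ^ l = 1) (hfree : ∀ i, 0 < i → i < l → ∀ x : X, (σ ^ i) x ≠ x) :
    l ∣ Nat.card X := by
  classical
  cases isEmpty_or_nonempty X with
  | inl h => simp [Nat.card_of_isEmpty]
  | inr h =>
  obtain ⟨x0⟩ := h
  have hfin : IsOfFinOrder σ := isOfFinOrder_iff_pow_eq_one.2 ⟨l, hl, hσl⟩
  have hord : orderOf σ = l := by
    have hdvd := orderOf_dvd_of_pow_eq_one hσl
    rcases lt_or_eq_of_le (Nat.le_of_dvd hl hdvd) with hlt | heq
    · exact absurd (by rw [pow_orderOf_eq_one]; rfl)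
        (hfree (orderOf σ) hfin.orderOf_pos hlt x0)
    · exact heq
  set H := Subgroup.zpowers σ with hH
  have hcardH : Nat.card H = l := by rw [Nat.card_zpowers, hord]
  have hstab : ∀ x : X, MulAction.stabilizer H x = ⊥ := by
    intro x
    rw [eq_bot_iff]
    intro h hh
    obtain ⟨n, hn⟩ := mem_powers_iff_mem_zpowers.2 h.2
    replace hn : σ ^ n = (h : Equiv.Perm X) := hn
    rw [MulAction.mem_stabilizer_iff] at hh
    have hx : (σ ^ n) x = x := by
      have : ((h : Equiv.Perm X)) x = x := hh
      rw [← hn] at this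
      exact this
    have hmod : σ ^ (n % l) = σ ^ n := by rw [← hord]; exact pow_mod_orderOf σ n
    rcases Nat.eq_zero_or_pos (n % l) with h0 | hpos
    · have h1 : (h : Equiv.Perm X) = 1 := by rw [← hn, ← hmod, h0, pow_zero]
      rw [Subgroup.mem_bot]
      exact Subtype.ext h1
    · exact absurd (by rw [hmod]; exact hx) (hfree _ hpos (Nat.mod_lt _ hl) x)
  have horb : ∀ x : X, Nat.card (MulAction.orbit H x) = l := by
    intro x
    rw [Nat.card_congr (MulAction.orbitEquivQuotientStabilizer H x), hstab x,
      Nat.card_congr (QuotientGroup.quotientBot.toEquiv), hcardH]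
  cases nonempty_fintype X
  rw [Nat.card_eq_fintype_card, Fintype.card_congr (MulAction.selfEquivSigmaOrbits H X),
    Fintype.card_sigma]
  apply Finset.dvd_sum
  intro ω _
  rw [← Nat.card_eq_fintype_card, horb]

variable {m : ℕ} [NeZero m] {k : Type*} [Field k]

lemma aux_mul_rowi (A B : Matrix (Fin m) (Fin m) k) (hA : FirstRowOnly A)
    {i : Fin m} (hi : i ≠ 0) (j : Fin m) : (A * B) i j = B i j := by
  rw [Matrix.mul_apply]
  calc ∑ a, A i a * B a j = ∑ a, (1 : Matrix (Fin m) (Fin m) k) i a * B a j := by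
        apply Finset.sum_congr rfl; intro a _; rw [hA i a hi]
    _ = B i j := by rw [← Matrix.mul_apply, Matrix.one_mul]

lemma aux_mul_row0 (A B : Matrix (Fin m) (Fin m) k) (hB : FirstRowOnly B) (j : Fin m) :
    (A * B) 0 j = A 0 0 * B 0 j + (if j = 0 then 0 else A 0 j) := by
  rw [Matrix.mul_apply, ← Finset.add_sum_erase _ _ (Finset.mem_univ 0)]
  congr 1
  calc ∑ a ∈ Finset.univ.erase 0, A 0 a * B a j
      = ∑ a ∈ Finset.univ.erase 0, if a = j then A 0 a else 0 := by
        apply Finset.sum_congr rfl; intro a ha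
        rw [hB a j (Finset.mem_erase.mp ha).1, Matrix.one_apply]
        by_cases h : a = j <;> simp [h]
    _ = if j ∈ Finset.univ.erase 0 then A 0 j else 0 := Finset.sum_ite_eq' _ _ _
    _ = if j = 0 then 0 else A 0 j := by by_cases h : j = 0 <;> simp [h]

lemma aux_key (A B : Matrix (Fin m) (Fin m) k) (hA : FirstRowOnly A) (hB : FirstRowOnly B)
    (hB0 : B 0 0 = 1) : A * B = (1 + A 0 0 • (B - 1)) * A := by
  set C := 1 + A 0 0 • (B - 1) with hCdef
  have hC : FirstRowOnly C := by
    intro i j hi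
    simp [hCdef, Matrix.add_apply, Matrix.smul_apply, Matrix.sub_apply, hB i j hi]
  have hC00 : C 0 0 = 1 := by
    simp [hCdef, Matrix.add_apply, Matrix.smul_apply, Matrix.sub_apply, hB0,
      Matrix.one_apply_eq]
  have hC0j : ∀ j : Fin m, j ≠ 0 → C 0 j = A 0 0 * B 0 j := by
    intro j hj
    have h1 : (1 : Matrix (Fin m) (Fin m) k) 0 j = 0 := Matrix.one_apply_ne (Ne.symm hj)
    simp [hCdef, Matrix.add_apply, Matrix.smul_apply, Matrix.sub_apply, h1]
  ext i j
  by_cases hi : i = 0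
  · subst hi
    rw [aux_mul_row0 A B hB j, aux_mul_row0 C A hA j, hC00]
    by_cases hj : j = 0
    · subst hj; simp [hB0]
    · simp only [if_neg hj, hC0j j hj]; ring
  · rw [aux_mul_rowi A B hA hi, aux_mul_rowi C A hC hi, hB i j hi, hA i j hi]

/-- the (0,0) entry as a monoid hom on `G`. -/
def entryHom (G : Subgroup (GL (Fin m) k))
    (hG : ∀ A ∈ G, FirstRowOnly (A : Matrix (Fin m) (Fin m) k)) : G →* k where
  toFun x := ((x : GL (Fin m) k) : Matrix (Fin m) (Fin m) k) 0 0
  map_one' := by simp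
  map_mul' x y := by
    have h := aux_mul_row0 ((x : GL (Fin m) k) : Matrix (Fin m) (Fin m) k)
      ((y : GL (Fin m) k) : Matrix (Fin m) (Fin m) k) (hG y y.2) 0
    simpa using h

end Aux

/-- For a finite subgroup `G ⊆ GL(m,k)`, in characteristic `p > 0`, consisting of
matrices equal to the identity except possibly in the first row, with
`|G| = p^u·l`, `gcd(p,l) = 1`, `u ≥ 1`, `l ≥ 1`, the number `l` divides `p^u - 1`. -/
theorem stmt7 {m : ℕ} [NeZero m] {k : Type*} [Field k] [IsAlgClosed k]
    (p : ℕ) [Fact p.Prime] [CharP k p] (u l : ℕ) (hu : 1 ≤ u) (hl : 1 ≤ l)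
    (hlp : l.Coprime p)
    (G : Subgroup (GL (Fin m) k)) [Finite G]
    (hG : ∀ A ∈ G, FirstRowOnly (A : Matrix (Fin m) (Fin m) k))
    (hcard : Nat.card G = p ^ u * l) :
    l ∣ p ^ u - 1 := by
  classical
  haveI : Nonempty (Fin m) := ⟨0⟩
  set mat : G → Matrix (Fin m) (Fin m) k :=
    fun x => ((x : GL (Fin m) k) : Matrix (Fin m) (Fin m) k) with hmat
  have hFRO : ∀ x : G, FirstRowOnly (mat x) := fun x => hG x x.2
  have matmul : ∀ x y : G, mat (x * y) = mat x * mat y := fun x y => rfl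
  have matone : mat 1 = 1 := rfl
  have matinj : ∀ x y : G, mat x = mat y → x = y := fun x y h =>
    Subtype.ext (Units.ext h)
  have matpow : ∀ (x : G) (n : ℕ), mat (x ^ n) = mat x ^ n := by
    intro x n
    induction n with
    | zero => simpa using matone
    | succ i ih => rw [pow_succ, matmul, ih, pow_succ]
  set ψ : G →* kˣ := (entryHom G hG).toHomUnits with hψ
  have hψval : ∀ x : G, ((ψ x : kˣ) : k) = mat x 0 0 := fun x => rfl
  set N : Subgroup G := ψ.ker with hN
  have hNmem : ∀ x : G, x ∈ N ↔ mat x 0 0 = 1 := by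
    intro x
    rw [hN, MonoidHom.mem_ker, Units.ext_iff, hψval x, Units.val_one]
  -- kernel is a p-group
  have hmatp : ∀ x : G, mat x 0 0 = 1 → mat x ^ p = 1 := by
    intro x hx
    set Nm := mat x - 1 with hNm
    have hcol : ∀ i, Nm i 0 = 0 := by
      intro i
      by_cases hi : i = 0
      · subst hi; simp [hNm, Matrix.sub_apply, hx, Matrix.one_apply_eq]
      · simp [hNm, Matrix.sub_apply, hFRO x i 0 hi]
    have hrow : ∀ i a, i ≠ 0 → Nm i a = 0 := fun i a hi => by
      simp [hNm, Matrix.sub_apply, hFRO x i a hi]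
    have hN2 : Nm * Nm = 0 := by
      ext i j
      rw [Matrix.mul_apply, Matrix.zero_apply]
      apply Finset.sum_eq_zero
      intro a _
      by_cases ha : a = 0
      · subst ha; rw [hcol i, zero_mul]
      · rw [hrow a j ha, mul_zero]
    have hNp : Nm ^ p = 0 := by
      have h2 : (2 : ℕ) ≤ p := (Fact.out : p.Prime).two_le
      have hps : p = 2 + (p - 2) := by omega
      rw [hps, pow_add, sq, hN2, zero_mul]
    have hx1 : mat x = 1 + Nm := by rw [hNm]; abel
    rw [hx1, add_pow_char_of_commute _ (Commute.one_left Nm), one_pow, hNp, add_zero]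
  have hNpg : IsPGroup p N := by
    intro x
    refine ⟨1, ?_⟩
    have h1 : mat ((x : G) ^ p) = 1 := by
      rw [matpow]; exact hmatp x ((hNmem _).1 x.2)
    have h2 : (x : G) ^ p = 1 := matinj _ _ (by rw [h1, matone])
    rw [pow_one]
    exact Subtype.ext (by simpa using h2)
  -- counting the two pieces
  haveI : Finite ψ.range := Finite.of_surjective ψ.rangeRestrict ψ.rangeRestrict_surjective
  have hGcards : Nat.card G = Nat.card ψ.range * Nat.card N := by
    rw [Subgroup.card_eq_card_quotient_mul_card_subgroup N,
      Nat.card_congr (QuotientGroup.quotientKerEquivRange ψ).toEquiv]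
  obtain ⟨a, ha⟩ := IsPGroup.exists_card_eq hNpg
  -- no p-torsion in kˣ
  have hupow : ∀ ζ : kˣ, ζ ^ p = 1 → ζ = 1 := by
    intro ζ h
    have h1 : ((ζ : k) - 1) ^ p = 0 := by
      rw [sub_pow_char, one_pow, ← Units.val_pow_eq_pow_val, h, Units.val_one, sub_self]
    have h2 : (ζ : k) - 1 = 0 :=
      pow_eq_zero_iff (Fact.out : p.Prime).ne_zero |>.mp h1
    exact Units.ext (by rw [sub_eq_zero] at h2; simpa using h2)
  have hpr : ¬ p ∣ Nat.card ψ.range := by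
    intro hdvd
    obtain ⟨g, hg⟩ := exists_prime_orderOf_dvd_card' p hdvd
    have h1 : (g : kˣ) ^ p = 1 := by
      rw [← Subgroup.coe_pow, ← hg, pow_orderOf_eq_one, Subgroup.coe_one]
    have h2 : g = 1 := Subtype.ext (by rw [hupow _ h1, Subgroup.coe_one])
    rw [h2, orderOf_one] at hg
    exact (Fact.out : p.Prime).one_lt.ne hg
  -- a = u and card range = l
  have heq : Nat.card ψ.range * p ^ a = p ^ u * l := by rw [← ha, ← hGcards, hcard]
  have hau : p ^ a = p ^ u := by
    have hd1 : p ^ a ∣ p ^ u := by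
      have : p ^ a ∣ p ^ u * l := ⟨_, by rw [← heq]; ring⟩
      exact (Nat.Coprime.pow_left a hlp.symm).dvd_of_dvd_mul_right this
    have hd2 : p ^ u ∣ p ^ a := by
      have h3 : p ^ u ∣ Nat.card ψ.range * p ^ a := ⟨l, heq⟩
      have h4 : (p ^ u).Coprime (Nat.card ψ.range) :=
        Nat.Coprime.pow_left u (((Fact.out : p.Prime).coprime_iff_not_dvd).2 hpr)
      exact h4.dvd_of_dvd_mul_left h3
    exact Nat.dvd_antisymm hd1 hd2
  have hNcard : Nat.card N = p ^ u := by rw [ha, hau]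
  have hrange : Nat.card ψ.range = l := by
    have hpow : 0 < p ^ u := Nat.pow_pos (Fact.out : p.Prime).pos
    have h5 : p ^ u * Nat.card ψ.range = p ^ u * l := by
      rw [← heq, hau, mul_comm]
    exact Nat.eq_of_mul_eq_mul_left hpow h5
  -- pick a generator of the image
  haveI : IsCyclic ψ.range := inferInstance
  obtain ⟨gen, hgen⟩ := IsCyclic.exists_ofOrder_eq_natCard (α := ψ.range)
  rw [hrange] at hgen
  have hζuord : orderOf (gen : kˣ) = l := by rw [Subgroup.orderOf_coe, hgen]
  obtain ⟨g, hg⟩ := gen.2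
  set ζ : k := mat g 0 0 with hζ
  have hζu : ((gen : kˣ) : k) = ζ := by rw [← hg]; exact hψval g
  have hζl : ζ ^ l = 1 := by
    have := pow_orderOf_eq_one (gen : kˣ)
    rw [hζuord] at this
    calc ζ ^ l = (((gen : kˣ) : k)) ^ l := by rw [hζu]
    _ = (((gen : kˣ) ^ l : kˣ) : k) := by rw [Units.val_pow_eq_pow_val]
    _ = 1 := by rw [this, Units.val_one]
  have hζi : ∀ i : ℕ, 0 < i → i < l → ζ ^ i ≠ 1 := by
    intro i hi1 hi2 hcon
    have h1 : (gen : kˣ) ^ i = 1 := by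
      apply Units.ext
      rw [Units.val_pow_eq_pow_val, hζu, hcon, Units.val_one]
    have h2 := orderOf_dvd_of_pow_eq_one h1
    rw [hζuord] at h2
    exact absurd (Nat.le_of_dvd hi1 h2) (not_le.2 hi2)
  -- conjugation action on the kernel
  set f : MulAut N := MulAut.conjNormal g with hf
  have hstep : ∀ x : N, mat ((f x : N) : G) = 1 + ζ • (mat (x : G) - 1) := by
    intro x
    have hx00 : mat (x : G) 0 0 = 1 := (hNmem _).1 x.2
    have hkey := aux_key (mat g) (mat (x : G)) (hFRO g) (hFRO (x : G)) hx00
    have hconj : ((f x : N) : G) * g = g * (x : G) := by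
      rw [hf]
      show ((MulAut.conjNormal g (x) : N) : G) * g = g * (x : G)
      rw [MulAut.conjNormal_apply]
      group
    have h2 : mat ((f x : N) : G) * mat g = (1 + ζ • (mat (x : G) - 1)) * mat g := by
      rw [← matmul, hconj, matmul, hkey]
    exact (Units.isUnit ((g : G) : GL (Fin m) k)).mul_right_cancel h2
  have hiter : ∀ (i : ℕ) (x : N),
      mat (((f ^ i) x : N) : G) = 1 + ζ ^ i • (mat ((x : G)) - 1) := by
    intro i
    induction i with
    | zero =>
      intro x
      simp only [pow_zero, one_smul]
      show mat ((x : N) : G) = 1 + (mat ((x : G)) - 1)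
      abel
    | succ n ih =>
      intro x
      have h1 : (f ^ (n + 1)) x = f ((f ^ n) x) := by
        rw [pow_succ']; rfl
      rw [h1, hstep, ih x, add_sub_cancel_left, smul_smul, ← pow_succ']
  have hfl : ∀ x : N, (f ^ l) x = x := by
    intro x
    have h := hiter l x
    rw [hζl, one_smul, add_sub_cancel] at h
    exact Subtype.ext (matinj _ _ h)
  have hffree : ∀ i : ℕ, 0 < i → i < l → ∀ x : N, (f ^ i) x = x → x = 1 := by
    intro i hi1 hi2 x hfix
    have h := hiter i x
    rw [hfix] at h
    have h3 : mat (x : G) - 1 = ζ ^ i • (mat (x : G) - 1) := by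
      calc mat (x : G) - 1 = (1 + ζ ^ i • (mat (x : G) - 1)) - 1 := by rw [← h]
      _ = ζ ^ i • (mat (x : G) - 1) := by abel
    have h4 : (1 - ζ ^ i) • (mat (x : G) - 1) = 0 := by
      rw [sub_smul, one_smul, ← h3, sub_self]
    rcases smul_eq_zero.mp h4 with h5 | h5
    · exact absurd (sub_eq_zero.mp h5).symm (hζi i hi1 hi2)
    · have h6 : mat (x : G) = 1 := by
        have := sub_eq_zero.mp h5
        rw [this]
      exact Subtype.ext (matinj _ _ (h6.trans matone.symm))
  -- the permutation on nontrivial kernel elements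
  have hmapone : ∀ y : N, f y = 1 ↔ y = 1 := fun y => MulEquiv.map_eq_one_iff f
  set S := {y : N // y ≠ 1} with hS
  let σ : Equiv.Perm S :=
    ⟨fun y => ⟨f y.1, fun h => y.2 ((hmapone y.1).1 h)⟩,
     fun y => ⟨f.symm y.1, fun h => y.2 (by
        have := congrArg f h
        rwa [MulEquiv.apply_symm_apply, _root_.map_one] at this)⟩,
     fun y => Subtype.ext (f.symm_apply_apply y.1),
     fun y => Subtype.ext (f.apply_symm_apply y.1)⟩
  have hσval : ∀ y : S, (σ y).1 = f y.1 := fun y => rfl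
  have hσpow : ∀ (i : ℕ) (y : S), ((σ ^ i) y).1 = (f ^ i) y.1 := by
    intro i
    induction i with
    | zero => intro y; simp
    | succ n ih =>
      intro y
      have h1 : (σ ^ (n + 1)) y = σ ((σ ^ n) y) := by rw [pow_succ']; rfl
      have h2 : (f ^ (n + 1)) y.1 = f ((f ^ n) y.1) := by rw [pow_succ']; rfl
      rw [h1, h2, hσval, ih]
  have hσl : σ ^ l = 1 := by
    apply Equiv.ext
    intro y
    have h1 : ((σ ^ l) y).1 = y.1 := by rw [hσpow, hfl]
    exact Subtype.ext h1
  have hσfree : ∀ i : ℕ, 0 < i → i < l → ∀ y : S, (σ ^ i) y ≠ y := by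
    intro i hi1 hi2 y heq
    apply y.2
    apply hffree i hi1 hi2 y.1
    rw [← hσpow i y, heq]
  haveI : Finite N := inferInstance
  haveI : Finite S := inferInstance
  have hdvd : l ∣ Nat.card S := aux_free_perm_dvd σ l hl hσl hσfree
  have hcardS : Nat.card S = p ^ u - 1 := by
    have h4 : Nat.card S = Nat.card {y : N // ¬ (y = 1)} := rfl
    cases nonempty_fintype N
    rw [h4, Nat.card_eq_fintype_card]
    have h5 : Fintype.card {y : N // ¬ (y = 1)} =
        Fintype.card N - Fintype.card {y : N // y = 1} := Fintype.card_subtype_compl _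
    rw [h5, Fintype.card_subtype_eq, ← Nat.card_eq_fintype_card, hNcard]
  rwa [hcardS] at hdvd
end

section
/- Let k be an algebraically closed field of characteristic p > 0, and let G ⊂ PGL(m,k) be a finite subgroup isomorphic to (Z/pZ)^{⊕u} ⋊ Z/lZ with gcd(p,l) = 1. Then G is liftable to GL(m,k): there exists a subgroup H ⊂ GL(m,k) of order p^u·l mapping isomorphically onto G under the canonical projection. -/
open Matrix

/-- The projective linear group `PGL(m,k)`, the quotient of `GL(m,k)` by its center
(the scalar matrices). -/
abbrev PGLq (m : ℕ) (k : Type*) [Field k] :=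
  GL (Fin m) k ⧸ Subgroup.center (GL (Fin m) k)

/-- The natural projection `GL(m,k) → PGL(m,k)`. -/
abbrev prPGL (m : ℕ) (k : Type*) [Field k] : GL (Fin m) k →* PGLq m k :=
  QuotientGroup.mk' (Subgroup.center (GL (Fin m) k))

section Aux

variable {m : ℕ} {k : Type*} [Field k]

/-- Scalar matrices as elements of `GL(m,k)`. -/
noncomputable def scU (m : ℕ) (k : Type*) [Field k] : kˣ →* GL (Fin m) k :=
  Units.map (Matrix.scalar (Fin m) (α := k)).toMonoidHom

lemma scU_val (c : kˣ) : ((scU m k c : GL (Fin m) k) : Matrix (Fin m) (Fin m) k)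
    = Matrix.scalar (Fin m) (c : k) := rfl

lemma scU_mem_center (c : kˣ) : scU m k c ∈ Subgroup.center (GL (Fin m) k) := by
  rw [Subgroup.mem_center_iff]
  intro g
  apply Units.ext
  rw [Units.val_mul, Units.val_mul, scU_val]
  exact (Matrix.scalar_commute (c : k) (fun r => Commute.all _ _)
    (g : Matrix (Fin m) (Fin m) k)).eq.symm

lemma gl_eq_one_of_zero (hm : m = 0) (z : GL (Fin m) k) : z = 1 := by
  subst hm
  ext i j
  exact i.elim0

lemma exists_scU_of_mem_center {z : GL (Fin m) k}
    (hz : z ∈ Subgroup.center (GL (Fin m) k)) : ∃ c : kˣ, z = scU m k c := by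
  rcases Nat.eq_zero_or_pos m with hm | hm
  · exact ⟨1, by rw [gl_eq_one_of_zero hm z, _root_.map_one]⟩
  · have hcomm : ∀ t : TransvectionStruct (Fin m) k,
        Commute t.toMatrix (z : Matrix (Fin m) (Fin m) k) := by
      intro t
      have h := (Subgroup.mem_center_iff.mp hz)
        ⟨t.toMatrix, t.inv.toMatrix, t.mul_inv, t.inv_mul⟩
      exact congrArg Units.val h
    obtain ⟨c, hc⟩ := Matrix.mem_range_scalar_of_commute_transvectionStruct hcomm
    have hdet : IsUnit ((z : Matrix (Fin m) (Fin m) k).det) :=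
      (Matrix.isUnit_iff_isUnit_det _).mp z.isUnit
    have hcne : c ≠ 0 := by
      rintro rfl
      rw [← hc] at hdet
      have : (Matrix.scalar (Fin m) (0 : k)).det = 0 := by
        haveI := Fin.pos_iff_nonempty.mp hm
        rw [_root_.map_zero, Matrix.det_zero]
      rw [this] at hdet
      exact not_isUnit_zero hdet
    exact ⟨Units.mk0 c hcne, Units.ext hc.symm⟩

lemma scalar_inj_of_pos (hm : 0 < m) {a b : k}
    (h : Matrix.scalar (Fin m) a = Matrix.scalar (Fin m) b) : a = b := by
  have := congrFun (congrFun h ⟨0, hm⟩) ⟨0, hm⟩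
  simpa [Matrix.scalar_apply] using this

/-- The center of `GL(m,k)` has no nontrivial `p`-torsion in characteristic `p`. -/
lemma center_p_torsion_free (p : ℕ) [Fact p.Prime] [CharP k p]
    {z : GL (Fin m) k} (hz : z ∈ Subgroup.center (GL (Fin m) k))
    (hzp : z ^ p = 1) : z = 1 := by
  rcases Nat.eq_zero_or_pos m with hm | hm
  · exact gl_eq_one_of_zero hm z
  · obtain ⟨c, rfl⟩ := exists_scU_of_mem_center hz
    rw [← _root_.map_pow] at hzp
    have h1 : Matrix.scalar (Fin m) ((c : k) ^ p) = Matrix.scalar (Fin m) (1 : k) := by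
      have := congrArg Units.val hzp
      rw [scU_val] at this
      simpa [_root_.map_pow] using this
    have h2 : (c : k) ^ p = 1 := scalar_inj_of_pos hm h1
    have h3 : (c : k) = 1 := by
      apply frobenius_inj k p
      rw [frobenius_def, frobenius_def, h2, one_pow]
    have : c = 1 := Units.ext h3
    rw [this, _root_.map_one]

/-- The center of `GL(m,k)` is divisible when `k` is algebraically closed. -/
lemma center_divisible [IsAlgClosed k] {z : GL (Fin m) k}
    (hz : z ∈ Subgroup.center (GL (Fin m) k)) {n : ℕ} (hn : n ≠ 0) :
    ∃ w ∈ Subgroup.center (GL (Fin m) k), w ^ n = z := by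
  obtain ⟨c, rfl⟩ := exists_scU_of_mem_center hz
  obtain ⟨d, hd⟩ := IsAlgClosed.exists_pow_nat_eq (c : k) (Nat.pos_of_ne_zero hn)
  have hdne : d ≠ 0 := by
    rintro rfl
    rw [zero_pow hn] at hd
    exact c.ne_zero hd.symm
  refine ⟨scU m k (Units.mk0 d hdne), scU_mem_center _, ?_⟩
  rw [← _root_.map_pow]
  congr 1
  ext
  exact hd

end Aux

/-- Over an algebraically closed field of characteristic `p > 0`, every finite
subgroup of `PGL(m,k)` isomorphic to `(ℤ/pℤ)^u ⋊ ℤ/lℤ` with `gcd(p,l) = 1` is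
liftable: there is a subgroup `H` of `GL(m,k)` of order `p^u·l` mapped isomorphically
onto `G` by the canonical projection. -/
theorem stmt12 {m : ℕ} {k : Type*} [Field k] [IsAlgClosed k]
    (p : ℕ) [Fact p.Prime] [CharP k p] (u l : ℕ) (hl : l.Coprime p)
    (G : Subgroup (PGLq m k))
    (φ : Multiplicative (ZMod l) →* MulAut (Fin u → Multiplicative (ZMod p)))
    (hG : Nonempty (G ≃*
      SemidirectProduct (Fin u → Multiplicative (ZMod p)) (Multiplicative (ZMod l)) φ)) :
    ∃ H : Subgroup (GL (Fin m) k),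
      Nat.card H = p ^ u * l ∧
      Subgroup.map (prPGL m k) H = G ∧
      ∀ x ∈ H, prPGL m k x = 1 → x = 1 := by
  classical
  obtain ⟨e⟩ := hG
  set N := Fin u → Multiplicative (ZMod p) with hN
  set C := Multiplicative (ZMod l) with hC
  have hp : p.Prime := Fact.out
  have hl0 : l ≠ 0 := by
    rintro rfl
    rw [Nat.Coprime, Nat.gcd_zero_left] at hl
    exact hp.ne_one hl
  haveI : NeZero l := ⟨hl0⟩
  set π := prPGL m k with hπ
  set Z := Subgroup.center (GL (Fin m) k) with hZ
  -- kernel of π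
  have hker : ∀ x : GL (Fin m) k, π x = 1 ↔ x ∈ Z := fun x =>
    QuotientGroup.eq_one_iff x
  -- uniqueness of lifts of p-power order
  have uniqp : ∀ y₁ y₂ : GL (Fin m) k, π y₁ = π y₂ → y₁ ^ p = 1 → y₂ ^ p = 1 → y₁ = y₂ := by
    intro y₁ y₂ hπy h1 h2
    have hzZ : y₁⁻¹ * y₂ ∈ Z := by
      rw [← hker, _root_.map_mul, _root_.map_inv, hπy, inv_mul_cancel]
    have hcomm : Commute y₁ (y₁⁻¹ * y₂) := (Subgroup.mem_center_iff.mp hzZ y₁)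
    have hy2 : y₂ = y₁ * (y₁⁻¹ * y₂) := by group
    have hzp : (y₁⁻¹ * y₂) ^ p = 1 := by
      have := h2
      rw [hy2, hcomm.mul_pow, h1, one_mul] at this
      exact this
    have : y₁⁻¹ * y₂ = 1 := center_p_torsion_free p hzZ hzp
    rw [hy2, this, mul_one]
  -- existence of lifts of order dividing n
  have exlift : ∀ (g : PGLq m k) (n : ℕ), n ≠ 0 → g ^ n = 1 →
      ∃ y : GL (Fin m) k, π y = g ∧ y ^ n = 1 := by
    intro g n hn hg
    obtain ⟨x, hx⟩ := QuotientGroup.mk'_surjective Z g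
    have hxn : x ^ n ∈ Z := by
      rw [← hker, _root_.map_pow]
      show (π x) ^ n = 1
      rw [hx, hg]
    obtain ⟨w, hwZ, hwn⟩ := center_divisible hxn hn
    have hcomm : Commute x w := Subgroup.mem_center_iff.mp hwZ x
    refine ⟨x * w⁻¹, ?_, ?_⟩
    · rw [_root_.map_mul, _root_.map_inv, (hker w).mpr hwZ, inv_one, mul_one, hx]
    · rw [hcomm.inv_right.mul_pow, inv_pow, hwn, mul_inv_cancel]
  -- the embedding of the abstract semidirect product into PGL
  set j : (N ⋊[φ] C) →* PGLq m k := G.subtype.comp e.symm.toMonoidHom with hj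
  have hjinj : Function.Injective j := fun a b h =>
    e.symm.injective (Subtype.ext h)
  -- conjugation formula
  have conjpow : ∀ (x y : GL (Fin m) k) (n : ℕ), (x * y * x⁻¹) ^ n = x * y ^ n * x⁻¹ := by
    intro x y n
    induction n with
    | zero => simp
    | succ n ih => rw [pow_succ, ih, pow_succ]; group
  -- p-torsion in N
  have hNpow : ∀ nn : N, nn ^ p = 1 := by
    intro nn
    funext i
    show (nn i) ^ p = 1
    have : (nn i) ^ p = Multiplicative.ofAdd (p • (nn i).toAdd) := by
      rw [ofAdd_nsmul, ofAdd_toAdd]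
    rw [this]
    have : p • (nn i).toAdd = 0 := by
      rw [nsmul_eq_mul, ZMod.natCast_self, zero_mul]
    rw [this, ofAdd_zero]
  -- canonical lifts of the p-part
  have exliftN : ∀ nn : N, ∃ y : GL (Fin m) k,
      π y = j (SemidirectProduct.inl nn) ∧ y ^ p = 1 := by
    intro nn
    apply exlift _ p hp.ne_zero
    rw [← _root_.map_pow, ← _root_.map_pow, hNpow, _root_.map_one, _root_.map_one]
  choose σf hσπ hσp using exliftN
  have σuniq : ∀ (nn : N) (y : GL (Fin m) k),
      π y = j (SemidirectProduct.inl nn) → y ^ p = 1 → y = σf nn := fun nn y hy hyp =>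
    uniqp y (σf nn) (hy.trans (hσπ nn).symm) hyp (hσp nn)
  -- commutation of the canonical lifts
  have σcomm : ∀ a b : N, Commute (σf a) (σf b) := by
    intro a b
    have h1 : σf a * σf b * (σf a)⁻¹ = σf b := by
      apply σuniq
      · have hab : a * b * a⁻¹ = b := by rw [mul_comm a b, mul_inv_cancel_right]
        conv_rhs => rw [← hab]
        simp only [_root_.map_mul, _root_.map_inv, hσπ]
        exact congrArg (_ * ·) (_root_.map_inv (j.comp SemidirectProduct.inl) a).symm
      · rw [conjpow, hσp, mul_one, mul_inv_cancel]
    exact mul_inv_eq_iff_eq_mul.mp h1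
  -- the p-part homomorphism
  set σ : N →* GL (Fin m) k :=
    { toFun := σf
      map_one' := (σuniq 1 1 (by rw [_root_.map_one, _root_.map_one, _root_.map_one]) (one_pow p)).symm
      map_mul' := fun a b => (σuniq (a * b) (σf a * σf b)
        (by rw [_root_.map_mul, hσπ, hσπ, _root_.map_mul, _root_.map_mul])
        (by rw [(σcomm a b).mul_pow, hσp, hσp, one_mul])).symm } with hσ
  have hσapp : ∀ nn : N, σ nn = σf nn := fun _ => rfl
  -- the cyclic part
  set c0 : C := Multiplicative.ofAdd (1 : ZMod l) with hc0
  
  have hc0pow : ∀ x : C, c0 ^ (x.toAdd.val) = x := by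
    intro x
    rw [hc0, ← ofAdd_nsmul]
    have : x.toAdd.val • (1 : ZMod l) = x.toAdd := by
      rw [nsmul_eq_mul, mul_one]
      exact ZMod.natCast_rightInverse x.toAdd
    rw [this, ofAdd_toAdd]
  have hc0l : c0 ^ l = 1 := by
    rw [hc0, ← ofAdd_nsmul]
    have : l • (1 : ZMod l) = 0 := by
      rw [nsmul_eq_mul, mul_one, ZMod.natCast_self]
    rw [this, ofAdd_zero]
  have hgc : (j (SemidirectProduct.inr c0)) ^ l = 1 := by
    rw [← _root_.map_pow, ← _root_.map_pow, hc0l, _root_.map_one, _root_.map_one]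
  obtain ⟨ch, hchπ, hchl⟩ := exlift (j (SemidirectProduct.inr c0)) l hl0 hgc
  set F : C →* GL (Fin m) k :=
    { toFun := fun c => ch ^ c.toAdd.val
      map_one' := by
        show ch ^ (Multiplicative.toAdd (1 : C)).val = 1
        rw [toAdd_one, ZMod.val_zero, pow_zero]
      map_mul' := fun a b => by
        show ch ^ ((a * b).toAdd.val) = ch ^ a.toAdd.val * ch ^ b.toAdd.val
        rw [toAdd_mul, ZMod.val_add, ← pow_eq_pow_mod _ hchl, pow_add] } with hF
  have hFπ : ∀ c : C, π (F c) = j (SemidirectProduct.inr c) := by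
    intro c
    show π (ch ^ (Multiplicative.toAdd c).val) = j (SemidirectProduct.inr c)
    rw [_root_.map_pow, hchπ, ← _root_.map_pow, ← _root_.map_pow, hc0pow]
  -- compatibility for the semidirect product lift
  have compat : ∀ c : C, σ.comp (φ c).toMonoidHom
      = (MulAut.conj (F c)).toMonoidHom.comp σ := by
    intro c
    refine MonoidHom.ext fun nn => ?_
    show σ ((φ c) nn) = MulAut.conj (F c) (σ nn)
    rw [MulAut.conj_apply, hσapp, hσapp]
    symm
    apply σuniq
    · simp only [SemidirectProduct.inl_aut, _root_.map_mul, _root_.map_inv, hFπ, hσπ]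
    · rw [conjpow, hσp, mul_one, mul_inv_cancel]
  set f : (N ⋊[φ] C) →* GL (Fin m) k := SemidirectProduct.lift σ F compat with hf
  have hπf : π.comp f = j := by
    apply SemidirectProduct.hom_ext
    · refine MonoidHom.ext fun nn => ?_
      show π (f (SemidirectProduct.inl nn)) = j (SemidirectProduct.inl nn)
      rw [hf, SemidirectProduct.lift_inl, hσapp]
      exact hσπ nn
    · refine MonoidHom.ext fun c => ?_
      show π (f (SemidirectProduct.inr c)) = j (SemidirectProduct.inr c)
      rw [hf, SemidirectProduct.lift_inr]
      exact hFπ c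
  have hπf' : ∀ x, π (f x) = j x := fun x => DFunLike.congr_fun hπf x
  have hfinj : Function.Injective f := by
    intro a b hab
    apply hjinj
    rw [← hπf', ← hπf', hab]
  refine ⟨f.range, ?_, ?_, ?_⟩
  · -- cardinality
    have h1 : Nat.card f.range = Nat.card (N ⋊[φ] C) :=
      Nat.card_congr (MonoidHom.ofInjective hfinj).toEquiv.symm
    have h2 : Nat.card (N ⋊[φ] C) = Nat.card N * Nat.card C := by
      have eq : (N ⋊[φ] C) ≃ N × C :=
        { toFun := fun x => (x.left, x.right)
          invFun := fun q => ⟨q.1, q.2⟩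
          left_inv := fun x => by cases x; rfl
          right_inv := fun q => rfl }
      rw [Nat.card_congr eq, Nat.card_prod]
    have hNcard : Nat.card N = p ^ u := by
      rw [hN, Nat.card_pi]
      have : Nat.card (Multiplicative (ZMod p)) = p := by
        rw [Nat.card_congr (Multiplicative.toAdd (α := ZMod p)), Nat.card_zmod]
      simp [this]
    have hCcard : Nat.card C = l := by
      rw [hC, Nat.card_congr (Multiplicative.toAdd (α := ZMod l)), Nat.card_zmod]
    rw [h1, h2, hNcard, hCcard]
  · -- image
    rw [← MonoidHom.range_comp, hπf, hj, MonoidHom.range_comp,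
      MonoidHom.range_eq_top.mpr e.symm.surjective, ← MonoidHom.range_eq_map,
      Subgroup.range_subtype]
  · -- injectivity on H
    intro x hx hx1
    obtain ⟨y, rfl⟩ := hx
    have h1 : j y = 1 := by rw [← hπf']; exact hx1
    have h2 : e.symm y = 1 := Subtype.ext h1
    have h3 : y = 1 := by
      have := congrArg e h2
      rwa [MulEquiv.apply_symm_apply, _root_.map_one] at this
    rw [h3, _root_.map_one]
end
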